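/- arXiv:1707.02615 — 6 statements merged into one kernel-verified Lean document; each statement's English description precedes it below -/
import Mathlib

section
/- Let p > 2 be prime, κ a positive integer not divisible by p, m_1,…,m_n positive integers, and M_a, M_{a,b} positive integers with M_a ≡ -m_a/κ and M_{a,b} ≡ m_a m_b/(2κ) (mod p). Let Φ^(p)(t,z) = Π_{a<b}(z_a-z_b)^{M_{a,b}} Π_a (t-z_a)^{M_a} ∈ F_p[t,z_1,…,z_n], and write Φ^(p)(t,z)·(1/(t-z_1),…,1/(t-z_n)) = Σ_i I^(i)(z,q)(t-q)^i with I^(i)(z,q) ∈ (F_p[z])^n. Then for any integer q and positive integer l, the vector I = I^(lp-1)(z,q) satisfies m_1 I_1 + … + m_n I_n = 0 in F_p[z]. -/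
open Finset MvPolynomial

lemma derivative_finset_prod' {R : Type*} [CommSemiring R] {ι : Type*} [DecidableEq ι]
    (s : Finset ι) (f : ι → Polynomial R) :
    Polynomial.derivative (∏ i ∈ s, f i) =
      ∑ i ∈ s, (∏ j ∈ s.erase i, f j) * Polynomial.derivative (f i) := by
  induction s using Finset.induction with
  | empty => simp
  | @insert a s h ih =>
    rw [Finset.prod_insert h, Polynomial.derivative_mul, ih, Finset.sum_insert h,
      Finset.erase_insert h, Finset.mul_sum]
    congr 1
    · exact mul_comm _ _
    · refine Finset.sum_congr rfl fun i hi => ?_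
      have hia : i ≠ a := fun e => h (e ▸ hi)
      rw [Finset.erase_insert_of_ne hia.symm,
        Finset.prod_insert (fun e => h (Finset.mem_of_mem_erase e)), mul_assoc]

/-- Mod-`p` construction of polynomial solutions: with
`Φ⁽ᵖ⁾(t,z) = ∏_{a<b}(z_a-z_b)^{M_{a,b}} ∏ₐ(t-z_a)^{M_a}` over `𝔽_p`,
`M_a ≡ -m_a/κ`, `M_{a,b} ≡ m_a m_b/(2κ) (mod p)`, and
`Φ⁽ᵖ⁾(t,z)·(1/(t-z₁),…,1/(t-zₙ)) = ∑ᵢ I⁽ⁱ⁾(z,q)(t-q)ⁱ`, the vector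
`I = I^{(lp-1)}(z,q)` satisfies `m₁I₁ + ⋯ + mₙIₙ = 0` in `𝔽_p[z]`. -/
theorem kz_modp_singular_relation (p : ℕ) [Fact p.Prime] (hp : 2 < p)
    (n : ℕ) (κ : ℕ) (hκpos : 0 < κ) (hκ : ¬ (p : ℕ) ∣ κ)
    (m : Fin n → ℕ) (hm : ∀ a, 0 < m a)
    (M : Fin n → ℕ) (hMpos : ∀ a, 0 < M a)
    (Mab : Fin n → Fin n → ℕ) (hMabpos : ∀ a b, a < b → 0 < Mab a b)
    (hM : ∀ a, (M a : ZMod p) = -((m a : ZMod p) / (κ : ZMod p)))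
    (hMab : ∀ a b, a < b →
      (Mab a b : ZMod p) = (m a : ZMod p) * (m b : ZMod p) / (2 * (κ : ZMod p)))
    (q : ℤ) (l : ℕ) (hl : 0 < l)
    -- the vector of polynomials `Φ⁽ᵖ⁾(t,z)/(t-z_j)`, `j = 1,…,n`
    (F : Fin n → Polynomial (MvPolynomial (Fin n) (ZMod p)))
    (hF : ∀ j, F j =
      Polynomial.C (∏ e ∈ univ.filter (fun e : Fin n × Fin n => e.1 < e.2),
          (X e.1 - X e.2) ^ Mab e.1 e.2) *
        ∏ a, (Polynomial.X - Polynomial.C (X a)) ^ (if a = j then M a - 1 else M a))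
    -- the Taylor coefficients `I⁽ⁱ⁾(z,q)` at `t = q`
    (I : ℕ → Fin n → MvPolynomial (Fin n) (ZMod p))
    (hI : ∀ i j, I i j = (Polynomial.taylor ((q : ℤ) : MvPolynomial (Fin n) (ZMod p)) (F j)).coeff i) :
    ∑ j, (m j : MvPolynomial (Fin n) (ZMod p)) * I (l * p - 1) j = 0 := by
  classical
  set c : MvPolynomial (Fin n) (ZMod p) := ((q : ℤ) : MvPolynomial (Fin n) (ZMod p)) with hc
  set S : MvPolynomial (Fin n) (ZMod p) := ∏ e ∈ univ.filter (fun e : Fin n × Fin n => e.1 < e.2),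
      (X e.1 - X e.2) ^ Mab e.1 e.2 with hS
  set f : Fin n → Polynomial (MvPolynomial (Fin n) (ZMod p)) := fun a => (Polynomial.X - Polynomial.C (X a)) ^ M a with hf
  set k : ℕ := l * p - 1 with hk
  have hppos : 0 < p := (Fact.out : p.Prime).pos
  have hk1 : k + 1 = l * p := Nat.succ_pred_eq_of_pos (Nat.mul_pos hl hppos)
  -- κ is invertible mod p
  have hκ0 : (κ : ZMod p) ≠ 0 := by
    simpa [ZMod.natCast_eq_zero_iff] using hκ
  have hmM : ∀ j, (m j : ZMod p) = -((κ : ZMod p) * (M j : ZMod p)) := by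
    intro j
    rw [hM j]
    field_simp
  have hcast : ∀ j, ((m j : ℕ) : MvPolynomial (Fin n) (ZMod p)) = -((κ : MvPolynomial (Fin n) (ZMod p)) * ((M j : ℕ) : MvPolynomial (Fin n) (ZMod p))) := by
    intro j
    rw [← map_natCast (MvPolynomial.C : ZMod p →+* MvPolynomial (Fin n) (ZMod p)) (m j), hmM j]
    push_cast
    simp [map_neg, map_mul]
  -- rewrite F j
  have hF' : ∀ j, F j = Polynomial.C S *
      ((Polynomial.X - Polynomial.C (X j)) ^ (M j - 1) * ∏ a ∈ univ.erase j, f a) := by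
    intro j
    rw [hF j]
    congr 1
    rw [← Finset.mul_prod_erase univ _ (Finset.mem_univ j), if_pos rfl]
    congr 1
    exact Finset.prod_congr rfl fun a ha => by
      rw [if_neg (Finset.ne_of_mem_erase ha)]
  -- the key differential identity
  have hkey : ∑ j, Polynomial.C ((m j : ℕ) : MvPolynomial (Fin n) (ZMod p)) * F j
      = Polynomial.C (-(κ : MvPolynomial (Fin n) (ZMod p))) *
        Polynomial.derivative (Polynomial.C S * ∏ a, f a) := by
    rw [Polynomial.derivative_mul, Polynomial.derivative_C, zero_mul, zero_add,
      derivative_finset_prod', Finset.mul_sum, Finset.mul_sum]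
    refine Finset.sum_congr rfl fun j _ => ?_
    have hdf : Polynomial.derivative (f j)
        = Polynomial.C ((M j : ℕ) : MvPolynomial (Fin n) (ZMod p)) * (Polynomial.X - Polynomial.C (X j)) ^ (M j - 1) := by
      simp [hf, Polynomial.derivative_pow]
    rw [hF' j, hdf, hcast j]
    simp only [map_neg, map_mul]
    ring
  -- the coefficient of a derivative at index k = l*p - 1 vanishes
  have hvanish : ∀ Φ : Polynomial (MvPolynomial (Fin n) (ZMod p)),
      (Polynomial.taylor c (Polynomial.derivative Φ)).coeff k = 0 := by
    intro Φ
    rw [Polynomial.taylor_coeff, ← Polynomial.hasseDeriv_one']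
    have h2 : Polynomial.hasseDeriv k (Polynomial.hasseDeriv 1 Φ)
        = (l * p) • Polynomial.hasseDeriv (k + 1) Φ := by
      have h3 := LinearMap.congr_fun (Polynomial.hasseDeriv_comp (R := MvPolynomial (Fin n) (ZMod p)) k 1) Φ
      rw [LinearMap.comp_apply, LinearMap.smul_apply] at h3
      rw [h3, Nat.choose_succ_self_right, hk1]
    rw [h2]
    have hp0 : ((l * p : ℕ) : Polynomial (MvPolynomial (Fin n) (ZMod p))) = 0 := by
      have h4 : ((p : ℕ) : MvPolynomial (Fin n) (ZMod p)) = 0 := by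
        rw [← map_natCast (MvPolynomial.C : ZMod p →+* MvPolynomial (Fin n) (ZMod p)) p, ZMod.natCast_self, map_zero]
      have h5 : ((p : ℕ) : Polynomial (MvPolynomial (Fin n) (ZMod p))) = 0 := by
        rw [← Polynomial.C_eq_natCast, h4, Polynomial.C_0]
      push_cast [h5]
      ring
    rw [nsmul_eq_mul, hp0, zero_mul, Polynomial.eval_zero]
  -- put everything together
  calc ∑ j, ((m j : ℕ) : MvPolynomial (Fin n) (ZMod p)) * I (l * p - 1) j
      = ∑ j, (Polynomial.taylor c (Polynomial.C ((m j : ℕ) : MvPolynomial (Fin n) (ZMod p)) * F j)).coeff k := by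
        refine Finset.sum_congr rfl fun j _ => ?_
        rw [hI, Polynomial.taylor_mul, Polynomial.taylor_C, Polynomial.coeff_C_mul]
    _ = (Polynomial.taylor c (∑ j, Polynomial.C ((m j : ℕ) : MvPolynomial (Fin n) (ZMod p)) * F j)).coeff k := by
        rw [map_sum, Polynomial.finset_sum_coeff]
    _ = 0 := by
        rw [hkey, Polynomial.taylor_mul, Polynomial.taylor_C, Polynomial.coeff_C_mul,
          hvanish, mul_zero]
end

section
/- Let p = 3, n a positive integer, r a nonnegative integer with r ≡ n (mod 3) and r < n, and define I^[r]_j(z) = (Π_{1≤a<b≤n}(z_a-z_b)) · e_r(z_1,…,ẑ_j,…,z_n), where e_r is the r-th elementary symmetric polynomial of the variables with z_j omitted. Then I^[r]_1(z) + … + I^[r]_n(z) = 0 in F_3[z_1,…,z_n]. -/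
open Finset MvPolynomial

/-- For `p = 3`, `r ≡ n (mod 3)`, `r < n`, the components
`I^[r]_j(z) = (∏_{a<b}(z_a-z_b))·e_r(z₁,…,ẑⱼ,…,zₙ)` (with `e_r` the `r`-th
elementary symmetric polynomial of the variables with `z_j` omitted) satisfy
`I^[r]_1 + ⋯ + I^[r]_n = 0` in `𝔽₃[z]`. -/
theorem sum_Ir_eq_zero_mod3 (n : ℕ) (hn : 0 < n) (r : ℕ) (hr : r % 3 = n % 3)
    (hrn : r < n)
    (I : Fin n → MvPolynomial (Fin n) (ZMod 3))
    (hI : ∀ j, I j =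
      (∏ e ∈ univ.filter (fun e : Fin n × Fin n => e.1 < e.2), (X e.1 - X e.2)) *
        ∑ S ∈ (univ.erase j).powersetCard r, ∏ i ∈ S, X i) :
    ∑ j, I j = 0 := by
  have hset : ∀ j : Fin n, (univ.erase j).powersetCard r =
      (univ.powersetCard r).filter (fun S => j ∉ S) := by
    intro j
    ext S
    simp only [Finset.mem_powersetCard, Finset.mem_filter, Finset.subset_erase]
    tauto
  have hdvd : (3 : ℕ) ∣ n - r := by omega
  simp only [hI]
  rw [← Finset.mul_sum]
  have hzero : ∑ j : Fin n, ∑ S ∈ (univ.erase j).powersetCard r,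
      ∏ i ∈ S, (X i : MvPolynomial (Fin n) (ZMod 3)) = 0 := by
    simp only [hset, Finset.sum_filter]
    rw [Finset.sum_comm]
    apply Finset.sum_eq_zero
    intro S hS
    rw [← Finset.sum_filter, Finset.sum_const]
    have hcard : (univ.filter (fun j => j ∉ S)).card = n - r := by
      have hSr : S.card = r := (Finset.mem_powersetCard.mp hS).2
      rw [Finset.filter_not, Finset.filter_mem_eq_inter, Finset.univ_inter,
        Finset.card_sdiff_of_subset (Finset.subset_univ S), Finset.card_univ, Fintype.card_fin, hSr]
    rw [hcard, nsmul_eq_mul]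
    have : ((n - r : ℕ) : MvPolynomial (Fin n) (ZMod 3)) = 0 := by
      rw [← map_natCast (C : ZMod 3 →+* MvPolynomial (Fin n) (ZMod 3)),
        (ZMod.natCast_eq_zero_iff _ _).mpr hdvd, map_zero]
    rw [this, zero_mul]
  rw [hzero, mul_zero]
end

section
/- Let p > 3 be prime, x_1,…,x_4 ∈ F_p, and let c^{p-1}_j be the coefficient of t^{p-1} in Π_{s=1}^4 (t-x_s)^{(p-1)/2}/(t-x_j) ∈ F_p[t]. Then Σ_{t ∈ F_p, t ≠ x_j} (1 + χ(Π_{s=1}^4(t-x_s)))/(t-x_j) = -c^{p-1}_j in F_p, where χ is the quadratic character of F_p^× extended by χ(0) = 0. -/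
open Finset Polynomial

lemma quadChar_cast_pow (p : ℕ) [Fact p.Prime] (a : ZMod p) :
    ((quadraticChar (ZMod p) a : ℤ) : ZMod p) = a ^ (p / 2) := by
  have h := legendreSym.eq_pow p (a.val : ℤ)
  rw [legendreSym] at h
  push_cast at h
  rwa [ZMod.natCast_val, ZMod.cast_id] at h

lemma sum_pow_eq_zero (p : ℕ) [Fact p.Prime] (k : ℕ)
    (hk1 : k ≠ p - 1) (hk2 : k < 2 * (p - 1)) :
    ∑ t : ZMod p, t ^ k = 0 := by
  have hcard : Fintype.card (ZMod p) = p := ZMod.card p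
  have hp1 : 1 < p := (Fact.out : p.Prime).one_lt
  rcases lt_or_gt_of_ne hk1 with h | h
  · exact FiniteField.sum_pow_lt_card_sub_one (K := ZMod p) k (by rwa [hcard])
  · set r := k - (p - 1) with hr
    have hrpos : 0 < r := by omega
    have hrlt : r < p - 1 := by omega
    have hpt : ∀ t : ZMod p, t ^ k = t ^ r := by
      intro t
      rcases eq_or_ne t 0 with rfl | ht
      · rw [zero_pow (by omega : k ≠ 0), zero_pow hrpos.ne']
      · have hk : k = (p - 1) + r := by omega
        rw [hk, pow_add, ZMod.pow_card_sub_one_eq_one ht, one_mul]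
    rw [Finset.sum_congr rfl fun t _ => hpt t]
    exact FiniteField.sum_pow_lt_card_sub_one (K := ZMod p) r (by rwa [hcard])

lemma sum_pow_card_sub_one (p : ℕ) [Fact p.Prime] (hp : 1 < p) :
    ∑ t : ZMod p, t ^ (p - 1) = -1 := by
  have h : ∀ t : ZMod p, t ^ (p - 1) = 1 - (if t = 0 then 1 else 0) := by
    intro t
    rcases eq_or_ne t 0 with rfl | ht
    · rw [if_pos rfl, zero_pow (by omega : p - 1 ≠ 0)]; ring
    · rw [if_neg ht, ZMod.pow_card_sub_one_eq_one ht]; ring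
  rw [Finset.sum_congr rfl fun t _ => h t, Finset.sum_sub_distrib,
    Finset.sum_ite_eq' univ (0 : ZMod p) (fun _ => (1 : ZMod p))]
  simp [Finset.card_univ, ZMod.card, ZMod.natCast_self]

/-- For `p > 3` prime and `x₁,…,x₄ ∈ 𝔽_p`, with `χ` the quadratic character
(`χ(0)=0`), one has
`∑_{t ≠ x_j} (1 + χ(∏ₛ(t-x_s)))/(t-x_j) = -c_j^{p-1}`, where `c_j^{p-1}` is
the coefficient of `t^{p-1}` in `∏_{s=1}^4 (t-x_s)^{(p-1)/2}/(t-x_j)`. -/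
theorem genus_one_curve_integral_eq_neg_coeff (p : ℕ) [Fact p.Prime] (hp : 3 < p)
    (x : Fin 4 → ZMod p) (j : Fin 4) (c : ZMod p)
    (hc : c = Polynomial.coeff
      (∏ s, (Polynomial.X - Polynomial.C (x s)) ^
        (if s = j then (p - 1) / 2 - 1 else (p - 1) / 2)) (p - 1)) :
    ∑ t ∈ univ.filter (fun t : ZMod p => t ≠ x j),
      (1 + ((quadraticChar (ZMod p) (∏ s, (t - x s)) : ℤ) : ZMod p)) * (t - x j)⁻¹
      = -c := by
  have hP : p.Prime := Fact.out
  have h2 : p % 2 = 1 := Nat.odd_iff.mp (hP.odd_of_ne_two (by omega))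
  set m := (p - 1) / 2 with hm
  have hm2 : 2 * m = p - 1 := by omega
  have hmge : 2 ≤ m := by omega
  have hp2 : p / 2 = m := by omega
  set g : Polynomial (ZMod p) := ∏ s, (X - C (x s)) ^ (if s = j then m - 1 else m) with hg
  -- pointwise transformation of the summand
  have key : ∀ t ∈ univ.filter (fun t : ZMod p => t ≠ x j),
      (1 + ((quadraticChar (ZMod p) (∏ s, (t - x s)) : ℤ) : ZMod p)) * (t - x j)⁻¹
      = (t - x j)⁻¹ + g.eval t := by
    intro t ht
    rw [mem_filter] at ht
    have htj : t - x j ≠ 0 := sub_ne_zero.mpr ht.2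
    rw [quadChar_cast_pow, hp2, add_mul, one_mul]
    congr 1
    rw [hg, eval_prod]
    simp only [eval_pow, eval_sub, eval_X, eval_C]
    rw [← Finset.prod_pow]
    rw [← Finset.mul_prod_erase univ (fun s => (t - x s) ^ m) (mem_univ j),
      ← Finset.mul_prod_erase univ (fun s => (t - x s) ^ (if s = j then m - 1 else m))
        (mem_univ j), if_pos rfl]
    have hpe : ∀ s ∈ univ.erase j,
        (t - x s) ^ (if s = j then m - 1 else m) = (t - x s) ^ m := by
      intro s hs
      rw [if_neg (Finset.mem_erase.mp hs).1]
    rw [Finset.prod_congr rfl hpe, pow_sub₀ _ htj (by omega : 1 ≤ m), pow_one]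
    ring
  rw [Finset.sum_congr rfl key, Finset.sum_add_distrib]
  -- first sum is zero
  have hsum1 : ∑ t ∈ univ.filter (fun t : ZMod p => t ≠ x j), (t - x j)⁻¹ = 0 := by
    have e1 : ∑ t ∈ univ.filter (fun t : ZMod p => t ≠ x j), (t - x j)⁻¹
        = ∑ t : ZMod p, (t - x j)⁻¹ := by
      apply Finset.sum_subset (Finset.filter_subset _ _)
      intro t _ ht
      rw [Finset.mem_filter] at ht
      push_neg at ht
      rw [ht (mem_univ t), sub_self, inv_zero]
    have e2 : ∑ t : ZMod p, (t - x j)⁻¹ = ∑ u : ZMod p, u⁻¹ :=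
      Fintype.sum_equiv (Equiv.subRight (x j)) _ _ (fun t => rfl)
    have e3 : ∑ u : ZMod p, u⁻¹ = ∑ u : ZMod p, u :=
      Fintype.sum_equiv (Equiv.inv (ZMod p)) _ _ (fun u => rfl)
    have e4 : ∑ u : ZMod p, u = 0 := by
      have := sum_pow_eq_zero p 1 (by omega) (by omega)
      simpa using this
    rw [e1, e2, e3, e4]
  rw [hsum1, zero_add]
  -- second sum
  have e5 : ∑ t ∈ univ.filter (fun t : ZMod p => t ≠ x j), g.eval t
      = ∑ t : ZMod p, g.eval t := by
    apply Finset.sum_subset (Finset.filter_subset _ _)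
    intro t _ ht
    rw [Finset.mem_filter] at ht
    push_neg at ht
    rw [ht (mem_univ t), hg, eval_prod]
    apply Finset.prod_eq_zero (mem_univ j)
    simp only [if_pos rfl, eval_pow, eval_sub, eval_X, eval_C, sub_self]
    exact zero_pow (by omega : m - 1 ≠ 0)
  rw [e5]
  -- degree bound
  have hdeg : g.natDegree < 2 * (p - 1) := by
    have h1 : g.natDegree ≤ ∑ s, ((X - C (x s)) ^ (if s = j then m - 1 else m)).natDegree :=
      natDegree_prod_le _ _
    have h2' : ∀ s : Fin 4, ((X - C (x s)) ^ (if s = j then m - 1 else m)).natDegree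
        = (if s = j then m - 1 else m) := by
      intro s
      rw [natDegree_pow, natDegree_X_sub_C, mul_one]
    rw [Finset.sum_congr rfl fun s _ => h2' s] at h1
    have h3 : ∑ s : Fin 4, (if s = j then m - 1 else m) = (m - 1) + 3 * m := by
      rw [← Finset.add_sum_erase univ _ (mem_univ j), if_pos rfl]
      have : ∀ s ∈ univ.erase j, (if s = j then m - 1 else m) = m := by
        intro s hs; rw [if_neg (Finset.mem_erase.mp hs).1]
      rw [Finset.sum_congr rfl this, Finset.sum_const, Finset.card_erase_of_mem (mem_univ j)]
      simp [Finset.card_univ, mul_comm]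
    rw [h3] at h1
    omega
  have heval : ∀ t : ZMod p, g.eval t = ∑ k ∈ range (2 * (p - 1)), g.coeff k * t ^ k :=
    fun t => eval_eq_sum_range' hdeg t
  rw [Finset.sum_congr rfl fun t _ => heval t, Finset.sum_comm]
  have hterm : ∀ k ∈ range (2 * (p - 1)),
      ∑ t : ZMod p, g.coeff k * t ^ k = if k = p - 1 then -c else 0 := by
    intro k hk
    rw [Finset.mem_range] at hk
    rw [← Finset.mul_sum]
    rcases eq_or_ne k (p - 1) with rfl | hkne
    · rw [if_pos rfl, sum_pow_card_sub_one p hP.one_lt, hc]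
      ring
    · rw [if_neg hkne, sum_pow_eq_zero p k hkne hk, mul_zero]
  rw [Finset.sum_congr rfl hterm, Finset.sum_ite_eq' (range (2 * (p - 1))) (p - 1)
    (fun _ => -c)]
  rw [if_pos (Finset.mem_range.mpr (by omega))]
end

section
/- Let p be a prime with 3 | (p-1), x_1, x_2, x_3 ∈ F_p distinct, and let c^{p-1}_j be the coefficient of t^{p-1} in Π_{s=1}^3 (t-x_s)^{2(p-1)/3}/(t-x_j) ∈ F_p[t]. Let N(t) = #{y ∈ F_p : y³ = (t-x_1)(t-x_2)(t-x_3)}. Then Σ_{t ∈ F_p, t ≠ x_j} N(t)/(t-x_j) = -c^{p-1}_j in F_p, for j = 1, 2, 3. -/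
open Finset Polynomial

/-!
Write `f(t) = ∏ₛ (t - xₛ)` and `m = (p - 1) / 3`. Counting cube roots in the cyclic group `𝔽_p^×`
gives `N(t) = 1 + f(t)^m + f(t)^(2m)` in `𝔽_p`. The sum `∑ 1 / (t - x_j)` vanishes, and for
`k = 1, 2` the sum `∑ f(t)^(km) / (t - x_j)` is the sum over `𝔽_p` of the values of the
polynomial `G_k = f^(km) / (X - x_j)`. Since the power sums `∑ t^i` over `𝔽_p` vanish for
`i < 2(p - 1)` except at `i = p - 1`, where the sum is `-1`, that sum is `-[X^(p-1)] G_k`.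
As `deg G_1 = p - 2`, only `G_2` contributes, and its coefficient is `c`.
-/

theorem IsCyclic.range_powMonoidHom_eq_ker {G : Type*} [CommGroup G] [IsCyclic G] [Finite G]
    {n : ℕ} (hn : n ∣ Nat.card G) :
    (powMonoidHom n : G →* G).range = (powMonoidHom (Nat.card G / n)).ker := by
  refine Subgroup.eq_of_le_of_card_ge ?_ ?_
  · rintro _ ⟨y, rfl⟩
    simp [← pow_mul, Nat.mul_div_cancel' hn, pow_card_eq_one']
  · rw [IsCyclic.card_powMonoidHom_ker, IsCyclic.card_powMonoidHom_range,
      Nat.gcd_eq_right (Nat.div_dvd_of_dvd hn), Nat.gcd_eq_right hn]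

theorem Polynomial.prod_X_sub_C_pow_divByMonic {R ι : Type*} [CommRing R] [Fintype ι]
    [DecidableEq ι] (x : ι → R) (j : ι) {n : ℕ} (hn : n ≠ 0) :
    (∏ s, (X - C (x s))) ^ n /ₘ (X - C (x j))
      = ∏ s, (X - C (x s)) ^ (if s = j then n - 1 else n) := by
  rw [← mul_divByMonic_cancel_left (∏ s, (X - C (x s)) ^ (if s = j then n - 1 else n))
    (monic_X_sub_C (x j))]
  congr 1
  rw [← prod_pow, ← mul_prod_erase univ _ (mem_univ j),
    ← mul_prod_erase univ (fun s => (X - C (x s)) ^ (if s = j then n - 1 else n)) (mem_univ j),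
    if_pos rfl, ← mul_assoc, ← pow_succ', Nat.sub_add_cancel (Nat.pos_of_ne_zero hn)]
  exact congrArg _ (prod_congr rfl fun s hs => by rw [if_neg (ne_of_mem_erase hs)])

theorem Polynomial.natDegree_prod_X_sub_C_pow_divByMonic {R ι : Type*} [CommRing R]
    [IsDomain R] [Fintype ι] (x : ι → R) (j : ι) (n : ℕ) :
    ((∏ s, (X - C (x s))) ^ n /ₘ (X - C (x j))).natDegree = Fintype.card ι * n - 1 := by
  rw [natDegree_divByMonic _ (monic_X_sub_C _), natDegree_X_sub_C, natDegree_pow,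
    natDegree_finsetProd_X_sub_C_eq_card, card_univ, mul_comm]

namespace FiniteField

variable {K : Type*} [Field K] [Fintype K]

local notation "q" => Fintype.card K

theorem card_sub_one_pos : 0 < q - 1 := Nat.sub_pos_of_lt Fintype.one_lt_card

theorem card_sub_one_div_pos {n : ℕ} (hn : n ∣ q - 1) : 0 < (q - 1) / n :=
  Nat.div_pos (Nat.le_of_dvd card_sub_one_pos hn) (Nat.pos_of_dvd_of_pos hn card_sub_one_pos)

theorem natCard_units : Nat.card Kˣ = q - 1 := by
  classical rw [Nat.card_eq_fintype_card, Fintype.card_units]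

theorem exists_pow_eq_iff_pow_card_sub_one_div_eq_one {n : ℕ} (hn : n ∣ q - 1) {a : K}
    (ha : a ≠ 0) : (∃ y, y ^ n = a) ↔ a ^ ((q - 1) / n) = 1 := by
  lift a to Kˣ using ha.isUnit
  have hrange := SetLike.ext_iff.mp
    (IsCyclic.range_powMonoidHom_eq_ker (G := Kˣ) (natCard_units (K := K) ▸ hn)) a
  simp only [MonoidHom.mem_range, MonoidHom.mem_ker, powMonoidHom_apply,
    natCard_units (K := K)] at hrange
  rw [← Units.val_pow_eq_pow_val, Units.val_eq_one, ← hrange]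
  constructor
  · rintro ⟨y, hy⟩
    have hn0 : n ≠ 0 := (Nat.pos_of_dvd_of_pos hn card_sub_one_pos).ne'
    have hy0 : y ≠ 0 := by rintro rfl; exact a.ne_zero (by simpa [hn0] using hy.symm)
    exact ⟨Units.mk0 y hy0, Units.ext (by simpa using hy)⟩
  · rintro ⟨y, rfl⟩
    exact ⟨y, by simp⟩

theorem exists_isPrimitiveRoot_of_dvd {n : ℕ} (hn : n ∣ q - 1) :
    ∃ ζ : K, IsPrimitiveRoot ζ n := by
  obtain ⟨g, hg⟩ := IsCyclic.exists_generator (α := Kˣ)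
  have hg' : IsPrimitiveRoot (g : K) (q - 1) := by
    rw [IsPrimitiveRoot.coe_units_iff, ← natCard_units (K := K),
      ← orderOf_eq_card_of_forall_mem_zpowers hg]
    exact IsPrimitiveRoot.orderOf g
  exact ⟨_, Nat.div_div_self hn card_sub_one_pos.ne' ▸
    hg'.pow_of_dvd (card_sub_one_div_pos hn).ne' (Nat.div_dvd_of_dvd hn)⟩

theorem cast_card_pow_eq [DecidableEq K] {n : ℕ} (hn : n ∣ q - 1) (a : K) :
    ((#{y | y ^ n = a} : ℕ) : K) = ∑ i ∈ range n, a ^ (i * ((q - 1) / n)) := by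
  have hn0 : 0 < n := Nat.pos_of_dvd_of_pos hn card_sub_one_pos
  simp_rw [mul_comm _ ((q - 1) / n), pow_mul]
  rcases eq_or_ne a 0 with rfl | ha
  · obtain ⟨k, rfl⟩ := Nat.exists_eq_add_one.mpr hn0
    simp [sum_range_succ', zero_pow (card_sub_one_div_pos hn).ne', filter_eq']
  obtain ⟨ζ, hζ⟩ := exists_isPrimitiveRoot_of_dvd (K := K) hn
  have hcard : #{y | y ^ n = a} = Multiset.card (nthRoots n a) := by
    rw [← Multiset.toFinset_card_of_nodup (hζ.nthRoots_nodup ha)]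
    congr 1
    ext y
    simp [mem_nthRoots hn0]
  rw [hcard, hζ.card_nthRoots, exists_pow_eq_iff_pow_card_sub_one_div_eq_one hn ha]
  split_ifs with h
  · simp [h]
  · have hb : (a ^ ((q - 1) / n)) ^ n = 1 := by
      rw [← pow_mul, Nat.div_mul_cancel hn, pow_card_sub_one_eq_one a ha]
    rw [geom_sum_eq h, hb, sub_self, zero_div, Nat.cast_zero]

theorem sum_pow_card_sub_one : ∑ x : K, x ^ (q - 1) = -1 := by
  classical
  have h : ∀ x : K, x ^ (q - 1) = if x = 0 then 0 else 1 := fun x => by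
    split_ifs with hx
    · rw [hx, zero_pow card_sub_one_pos.ne']
    · exact pow_card_sub_one_eq_one x hx
  simp_rw [h, sum_ite, sum_const_zero, zero_add, sum_const, nsmul_one, filter_ne',
    card_erase_of_mem (mem_univ _), card_univ]
  rw [Nat.cast_sub Fintype.card_pos, cast_card_eq_zero, Nat.cast_one, zero_sub]

theorem sum_pow_of_lt_two_mul_card_sub_one {i : ℕ} (hi : i < 2 * (q - 1)) :
    ∑ x : K, x ^ i = if i = q - 1 then -1 else 0 := by
  split_ifs with h
  · rw [h, sum_pow_card_sub_one]
  rcases lt_or_gt_of_ne h with h | h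
  · exact sum_pow_lt_card_sub_one K i h
  obtain ⟨r, rfl⟩ : ∃ r, i = r + 1 + (q - 1) := ⟨i - q, by omega⟩
  have hfold : ∀ x : K, x ^ (r + 1 + (q - 1)) = x ^ (r + 1) := fun x => by
    rw [add_assoc, Nat.add_sub_cancel' Fintype.card_pos, pow_add, pow_card]; ring
  simp_rw [hfold]
  exact sum_pow_lt_card_sub_one K _ (by omega)

theorem sum_eval_eq_neg_coeff_card_sub_one (P : K[X]) (hP : P.natDegree < 2 * (q - 1)) :
    ∑ t, P.eval t = -P.coeff (q - 1) := by
  have hq := card_sub_one_pos (K := K)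
  calc ∑ t, P.eval t = ∑ i ∈ range (2 * (q - 1)), P.coeff i * ∑ t : K, t ^ i := by
        simp_rw [eval_eq_sum_range' hP, mul_sum]
        exact sum_comm
    _ = ∑ i ∈ range (2 * (q - 1)), if i = q - 1 then -P.coeff i else 0 :=
        sum_congr rfl fun i hi => by
          rw [sum_pow_of_lt_two_mul_card_sub_one (mem_range.mp hi),
            mul_ite, mul_neg_one, mul_zero]
    _ = -P.coeff (q - 1) := by rw [sum_ite_eq', if_pos (mem_range.2 (by omega))]

theorem sum_inv_sub_eq_zero (hq : 2 < q) (a : K) : ∑ t, (t - a)⁻¹ = 0 := by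
  rw [Fintype.sum_equiv (Equiv.subRight a) (fun t => (t - a)⁻¹) (·⁻¹) fun _ => rfl,
    Fintype.sum_equiv (Equiv.inv K) (·⁻¹) (· ^ 1) fun _ => (pow_one _).symm]
  exact sum_pow_lt_card_sub_one K 1 (by omega)

theorem sum_eval_mul_inv_sub_eq_neg_coeff_divByMonic (F : K[X]) (a : K)
    (hF : (X - C a) ^ 2 ∣ F) (hdeg : F.natDegree ≤ 2 * (q - 1)) :
    ∑ t, F.eval t * (t - a)⁻¹ = -(F /ₘ (X - C a)).coeff (q - 1) := by
  set G := F /ₘ (X - C a)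
  have hFG : F = (X - C a) * G := by
    refine (mul_divByMonic_eq_iff_isRoot.2 ?_).symm
    exact dvd_iff_isRoot.1 (dvd_trans (dvd_pow_self _ two_ne_zero) hF)
  have hGa : G.IsRoot a := by
    rw [hFG, pow_two, mul_dvd_mul_iff_left (X_sub_C_ne_zero a)] at hF
    exact dvd_iff_isRoot.1 hF
  rw [← sum_eval_eq_neg_coeff_card_sub_one G ?_]
  · refine sum_congr rfl fun t _ => ?_
    rcases eq_or_ne t a with rfl | ht
    · rw [sub_self, inv_zero, mul_zero, hGa.eq_zero]
    · rw [hFG, eval_mul, eval_sub, eval_X, eval_C, mul_comm, ← mul_assoc,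
        inv_mul_cancel₀ (sub_ne_zero.mpr ht), one_mul]
  · rw [natDegree_divByMonic F (monic_X_sub_C a), natDegree_X_sub_C]
    have := card_sub_one_pos (K := K)
    omega

theorem sum_prod_sub_pow_mul_inv_sub {ι : Type*} [Fintype ι] (x : ι → K) (j : ι) {n : ℕ}
    (hn : 2 ≤ n) (hdeg : Fintype.card ι * n ≤ 2 * (q - 1)) :
    ∑ t, (∏ s, (t - x s)) ^ n * (t - x j)⁻¹
      = -((∏ s, (X - C (x s))) ^ n /ₘ (X - C (x j))).coeff (q - 1) := by
  have hdvd : (X - C (x j)) ^ 2 ∣ (∏ s, (X - C (x s))) ^ n :=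
    (pow_dvd_pow _ hn).trans (pow_dvd_pow_of_dvd (dvd_prod_of_mem _ (mem_univ j)) n)
  have hdeg' : ((∏ s, (X - C (x s))) ^ n).natDegree ≤ 2 * (q - 1) := by
    rwa [natDegree_pow, natDegree_finsetProd_X_sub_C_eq_card, card_univ, mul_comm]
  simpa [eval_prod] using sum_eval_mul_inv_sub_eq_neg_coeff_divByMonic _ (x j) hdvd hdeg'

end FiniteField

open FiniteField in
theorem cubic_curve_integral_eq_neg_coeff_general (p : ℕ) [Fact p.Prime]
    (hp3 : 3 ∣ (p - 1)) (x : Fin 3 → ZMod p)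
    (j : Fin 3) (c : ZMod p)
    (hc : c = Polynomial.coeff
      (∏ s, (Polynomial.X - Polynomial.C (x s)) ^
        (if s = j then 2 * (p - 1) / 3 - 1 else 2 * (p - 1) / 3)) (p - 1))
    (N : ZMod p → ℕ)
    (hN : ∀ t, N t = (univ.filter (fun y : ZMod p => y ^ 3 = ∏ s, (t - x s))).card) :
    ∑ t ∈ univ.filter (fun t : ZMod p => t ≠ x j), (N t : ZMod p) * (t - x j)⁻¹
      = -c := by
  have hp : p.Prime := Fact.out
  set m := (p - 1) / 3
  have hm : p - 1 = 3 * m := (Nat.mul_div_cancel' hp3).symm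
  have hm2 : 2 ≤ m := by
    have : p ≠ 4 := by rintro rfl; norm_num at hp
    have := hp.two_le
    omega
  have hcount (t : ZMod p) : (N t : ZMod p) = ∑ i ∈ range 3, (∏ s, (t - x s)) ^ (i * m) := by
    rw [hN, cast_card_pow_eq (by rwa [ZMod.card]), ZMod.card]
  have hcoeff_eq_zero : ((∏ s, (X - C (x s))) ^ m /ₘ (X - C (x j))).coeff (p - 1) = 0 := by
    refine coeff_eq_zero_of_natDegree_lt ?_
    rw [natDegree_prod_X_sub_C_pow_divByMonic, Fintype.card_fin]
    omega
  rw [show 2 * (p - 1) / 3 = 2 * m by omega, ← prod_X_sub_C_pow_divByMonic x j (by omega)] at hc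
  -- the term at `t = x j` vanishes anyway, as `0⁻¹ = 0`
  rw [sum_filter_of_ne fun t _ h => by rintro rfl; simp at h]
  simp_rw [hcount, sum_mul]
  rw [sum_comm]
  simp only [sum_range_succ, sum_range_zero, zero_add, zero_mul, pow_zero, one_mul]
  rw [sum_inv_sub_eq_zero (by rw [ZMod.card]; omega),
    sum_prod_sub_pow_mul_inv_sub x j hm2 (by rw [Fintype.card_fin, ZMod.card]; omega),
    sum_prod_sub_pow_mul_inv_sub x j (by omega) (by rw [Fintype.card_fin, ZMod.card]; omega),
    ZMod.card, hcoeff_eq_zero, hc, neg_zero, zero_add, zero_add]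

/-- For `p ≡ 1 (mod 3)` prime and distinct `x₁,x₂,x₃ ∈ 𝔽_p`, with
`N(t) = #{y : y³ = (t-x₁)(t-x₂)(t-x₃)}`, one has
`∑_{t ≠ x_j} N(t)/(t-x_j) = -c_j^{p-1}` in `𝔽_p`, where `c_j^{p-1}` is the
coefficient of `t^{p-1}` in `∏ₛ(t-x_s)^{2(p-1)/3}/(t-x_j)`. -/
theorem cubic_curve_integral_eq_neg_coeff (p : ℕ) [Fact p.Prime]
    (hp3 : 3 ∣ (p - 1)) (x : Fin 3 → ZMod p) (hx : Function.Injective x)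
    (j : Fin 3) (c : ZMod p)
    (hc : c = Polynomial.coeff
      (∏ s, (Polynomial.X - Polynomial.C (x s)) ^
        (if s = j then 2 * (p - 1) / 3 - 1 else 2 * (p - 1) / 3)) (p - 1))
    (N : ZMod p → ℕ)
    (hN : ∀ t, N t = (univ.filter (fun y : ZMod p => y ^ 3 = ∏ s, (t - x s))).card) :
    ∑ t ∈ univ.filter (fun t : ZMod p => t ≠ x j), (N t : ZMod p) * (t - x j)⁻¹
      = -c :=
  cubic_curve_integral_eq_neg_coeff_general p hp3 x j c hc N hN
end

section
/- Let p > 2 be prime, M_1,…,M_n positive integers with M_1 + … + M_n ≡ -1 (mod p), M_{a,b} positive integers, and let Φ^(p)(t,z) = Π_{a<b}(z_a-z_b)^{M_{a,b}} Π_a(t-z_a)^{M_a}. Write Φ^(p)(t,z)·(1/(t-z_1),…,1/(t-z_n)) = Σ_i I^(i)(z,q)(t-q)^i over F_p. Then for any integer q and positive integer l, the vector I = I^(lp-1)(z,q) satisfies z_1 M_1 I_1(z) + … + z_n M_n I_n(z) = 0 in F_p[z]. -/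
open Finset MvPolynomial

private lemma polyDerivFinsetProd {R : Type*} [CommRing R] {ι : Type*} [DecidableEq ι]
    (s : Finset ι) (f : ι → Polynomial R) :
    Polynomial.derivative (∏ i ∈ s, f i) =
      ∑ i ∈ s, (∏ a ∈ s.erase i, f a) * Polynomial.derivative (f i) := by
  induction s using Finset.induction_on with
  | empty => simp
  | @insert x s hx ih =>
    rw [Finset.prod_insert hx, Polynomial.derivative_mul, Finset.sum_insert hx,
      Finset.erase_insert hx, ih]
    have h2 : (∑ i ∈ s, (∏ a ∈ (insert x s).erase i, f a) * Polynomial.derivative (f i))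
        = f x * ∑ i ∈ s, (∏ a ∈ s.erase i, f a) * Polynomial.derivative (f i) := by
      rw [Finset.mul_sum]
      refine Finset.sum_congr rfl fun i hi => ?_
      rw [Finset.erase_insert_of_ne (by rintro rfl; exact hx hi),
        Finset.prod_insert (fun h => hx (Finset.mem_of_mem_erase h))]
      ring
    rw [h2]
    ring

private lemma taylorDerivative' {R : Type*} [CommRing R] (r : R) (f : Polynomial R) :
    Polynomial.taylor r (Polynomial.derivative f) =
      Polynomial.derivative (Polynomial.taylor r f) := by
  simp [Polynomial.taylor_apply, Polynomial.derivative_comp]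

/-- Mod-`p` resonance relation: with `M₁ + ⋯ + Mₙ ≡ -1 (mod p)` and
`Φ⁽ᵖ⁾(t,z)·(1/(t-z₁),…,1/(t-zₙ)) = ∑ᵢ I⁽ⁱ⁾(z,q)(t-q)ⁱ` over `𝔽_p`, the vector
`I = I^{(lp-1)}(z,q)` satisfies `z₁M₁I₁ + ⋯ + zₙMₙIₙ = 0` in `𝔽_p[z]`. -/
theorem kz_modp_resonance_relation (p : ℕ) [Fact p.Prime] (hp : 2 < p)
    (n : ℕ) (M : Fin n → ℕ) (hMpos : ∀ a, 0 < M a)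
    (hMres : (∑ a, (M a : ZMod p)) = -1)
    (Mab : Fin n → Fin n → ℕ) (hMabpos : ∀ a b, a < b → 0 < Mab a b)
    (q : ℤ) (l : ℕ) (hl : 0 < l)
    -- the vector of polynomials `Φ⁽ᵖ⁾(t,z)/(t-z_j)`, `j = 1,…,n`
    (F : Fin n → Polynomial (MvPolynomial (Fin n) (ZMod p)))
    (hF : ∀ j, F j =
      Polynomial.C (∏ e ∈ univ.filter (fun e : Fin n × Fin n => e.1 < e.2),
          (X e.1 - X e.2) ^ Mab e.1 e.2) *
        ∏ a, (Polynomial.X - Polynomial.C (X a)) ^ (if a = j then M a - 1 else M a))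
    -- the Taylor coefficients `I⁽ⁱ⁾(z,q)` at `t = q`
    (I : Fin n → MvPolynomial (Fin n) (ZMod p))
    (hI : ∀ j, I j =
      (Polynomial.taylor ((q : ℤ) : MvPolynomial (Fin n) (ZMod p)) (F j)).coeff (l * p - 1)) :
    ∑ j, X j * (M j : MvPolynomial (Fin n) (ZMod p)) * I j = 0 := by
  classical
  set c0 : MvPolynomial (Fin n) (ZMod p) :=
    ∏ e ∈ univ.filter (fun e : Fin n × Fin n => e.1 < e.2), (X e.1 - X e.2) ^ Mab e.1 e.2
    with hc0
  set G : Fin n → Polynomial (MvPolynomial (Fin n) (ZMod p)) :=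
    fun a => Polynomial.X - Polynomial.C (X a) with hG
  set Φ : Polynomial (MvPolynomial (Fin n) (ZMod p)) :=
    Polynomial.C c0 * ∏ a, G a ^ M a with hΦ
  -- splitting the product in F j
  have hsplit : ∀ j : Fin n, (∏ a, G a ^ (if a = j then M a - 1 else M a)) =
      G j ^ (M j - 1) * ∏ a ∈ univ.erase j, G a ^ M a := by
    intro j
    rw [← Finset.mul_prod_erase univ (fun a => G a ^ (if a = j then M a - 1 else M a))
      (mem_univ j), if_pos rfl]
    congr 1
    exact Finset.prod_congr rfl fun a ha => by
      rw [if_neg (Finset.ne_of_mem_erase ha)]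
  -- key: (X - z_j) * F j = Φ
  have hkey : ∀ j, G j * F j = Φ := by
    intro j
    rw [hF, hΦ, hsplit j]
    have hpow : G j * (G j ^ (M j - 1)) = G j ^ M j := by
      rw [← pow_succ']
      congr 1
      have := hMpos j
      omega
    calc G j * (Polynomial.C c0 * (G j ^ (M j - 1) * ∏ a ∈ univ.erase j, G a ^ M a))
        = Polynomial.C c0 * ((G j * G j ^ (M j - 1)) * ∏ a ∈ univ.erase j, G a ^ M a) := by ring
      _ = Polynomial.C c0 * (G j ^ M j * ∏ a ∈ univ.erase j, G a ^ M a) := by rw [hpow]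
      _ = Polynomial.C c0 * ∏ a, G a ^ M a := by
          rw [Finset.mul_prod_erase univ (fun a => G a ^ M a) (mem_univ j)]
  -- derivative of Φ
  have hderiv : Polynomial.derivative Φ =
      ∑ j, Polynomial.C ((M j : MvPolynomial (Fin n) (ZMod p))) * F j := by
    rw [hΦ, Polynomial.derivative_mul, Polynomial.derivative_C, zero_mul, zero_add,
      polyDerivFinsetProd, Finset.mul_sum]
    refine Finset.sum_congr rfl fun j _ => ?_
    rw [hF, hsplit j, Polynomial.derivative_pow]
    have h1 : Polynomial.derivative (G j) = 1 := by
      simp [hG]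
    rw [h1, mul_one]
    push_cast
    ring
  -- main identity: ∑ z_j M_j F_j = (t Φ)'
  have hXΦ : Polynomial.derivative (Polynomial.X * Φ) =
      Polynomial.X * Polynomial.derivative Φ + Φ := by
    rw [Polynomial.derivative_mul, Polynomial.derivative_X, one_mul, add_comm]
  have hmain : (∑ j, Polynomial.C (X j * (M j : MvPolynomial (Fin n) (ZMod p))) * F j) =
      Polynomial.derivative (Polynomial.X * Φ) := by
    have hXF : ∀ j, Polynomial.C (X j) * F j = Polynomial.X * F j - Φ := by
      intro j
      rw [← hkey j, hG]
      ring
    have hCsum : (∑ j, Polynomial.C ((M j : MvPolynomial (Fin n) (ZMod p)))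
        : Polynomial (MvPolynomial (Fin n) (ZMod p))) = -1 := by
      rw [← map_sum]
      have h2 : (∑ j, (M j : MvPolynomial (Fin n) (ZMod p))) = -1 := by
        have h3 : (∑ j, (M j : MvPolynomial (Fin n) (ZMod p))) = C (∑ a, (M a : ZMod p)) := by
          rw [map_sum]
          exact Finset.sum_congr rfl fun a _ => by simp
        rw [h3, hMres]
        simp
      rw [h2]
      simp
    rw [hXΦ]
    calc (∑ j, Polynomial.C (X j * (M j : MvPolynomial (Fin n) (ZMod p))) * F j)
        = ∑ j, Polynomial.C ((M j : MvPolynomial (Fin n) (ZMod p))) *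
            (Polynomial.C (X j) * F j) := by
          refine Finset.sum_congr rfl fun j _ => ?_
          rw [map_mul]; ring
      _ = ∑ j, (Polynomial.X * (Polynomial.C ((M j : MvPolynomial (Fin n) (ZMod p))) * F j)
            - Polynomial.C ((M j : MvPolynomial (Fin n) (ZMod p))) * Φ) := by
          refine Finset.sum_congr rfl fun j _ => ?_
          rw [hXF j]; ring
      _ = Polynomial.X * (∑ j, Polynomial.C ((M j : MvPolynomial (Fin n) (ZMod p))) * F j)
            - (∑ j, Polynomial.C ((M j : MvPolynomial (Fin n) (ZMod p)))) * Φ := by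
          rw [Finset.sum_sub_distrib, Finset.mul_sum, Finset.sum_mul]
      _ = Polynomial.X * Polynomial.derivative Φ + Φ := by
          rw [hCsum, ← hderiv]; ring
  -- put everything together via Taylor coefficients
  have hlp : 1 ≤ l * p := Nat.one_le_iff_ne_zero.mpr (by positivity)
  have hsum : (∑ j, X j * (M j : MvPolynomial (Fin n) (ZMod p)) * I j) =
      (Polynomial.taylor ((q : ℤ) : MvPolynomial (Fin n) (ZMod p))
        (∑ j, Polynomial.C (X j * (M j : MvPolynomial (Fin n) (ZMod p))) * F j)).coeff
          (l * p - 1) := by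
    rw [map_sum, Polynomial.finset_sum_coeff]
    refine Finset.sum_congr rfl fun j _ => ?_
    rw [hI j, Polynomial.taylor_mul, Polynomial.taylor_C, Polynomial.coeff_C_mul]
  rw [hsum, hmain, taylorDerivative', Polynomial.coeff_derivative,
    Nat.sub_add_cancel hlp]
  have hz : ((l * p - 1 : ℕ) : MvPolynomial (Fin n) (ZMod p)) + 1 = 0 := by
    have h4 : ((l * p - 1 : ℕ) : MvPolynomial (Fin n) (ZMod p)) + 1
        = ((l * p - 1 + 1 : ℕ) : MvPolynomial (Fin n) (ZMod p)) := by push_cast; ring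
    rw [h4, Nat.sub_add_cancel hlp]
    push_cast
    simp [CharP.cast_eq_zero]
  rw [hz, mul_zero]
end

section
/- Let p = 3, n ≡ 2 (mod 3), r a positive integer with r ≡ n (mod 3) and r < n, and I^[r]_j(z) = (Π_{a<b}(z_a-z_b))·e_r(z_1,…,ẑ_j,…,z_n) ∈ F_3[z]. Then z_1 I^[r]_1(z) + … + z_n I^[r]_n(z) = 0 in F_3[z_1,…,z_n]. -/
open Finset MvPolynomial

/-- For `p = 3`, `n ≡ 2 (mod 3)`, `r > 0`, `r ≡ n (mod 3)`, `r < n`, the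
components `I^[r]_j(z) = (∏_{a<b}(z_a-z_b))·e_r(z₁,…,ẑⱼ,…,zₙ)` satisfy the
resonance relation `z₁I^[r]_1 + ⋯ + zₙI^[r]_n = 0` in `𝔽₃[z]`. -/
theorem resonance_mod3 (n : ℕ) (hn : n % 3 = 2) (r : ℕ) (hrpos : 0 < r)
    (hr : r % 3 = n % 3) (hrn : r < n)
    (I : Fin n → MvPolynomial (Fin n) (ZMod 3))
    (hI : ∀ j, I j =
      (∏ e ∈ univ.filter (fun e : Fin n × Fin n => e.1 < e.2), (X e.1 - X e.2)) *
        ∑ S ∈ (univ.erase j).powersetCard r, ∏ i ∈ S, X i) :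
    ∑ j, X j * I j = 0 := by
  have key : ∑ j : Fin n, X j * ∑ S ∈ (univ.erase j).powersetCard r, ∏ i ∈ S,
      (X i : MvPolynomial (Fin n) (ZMod 3))
      = (r+1 : ℕ) • ∑ T ∈ (univ : Finset (Fin n)).powersetCard (r+1), ∏ i ∈ T, X i := by
    have step : ∀ j : Fin n, X j * ∑ S ∈ (univ.erase j).powersetCard r, ∏ i ∈ S,
        (X i : MvPolynomial (Fin n) (ZMod 3))
        = ∑ S ∈ (univ.erase j).powersetCard r, ∏ i ∈ insert j S, X i := by
      intro j
      rw [Finset.mul_sum]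
      refine Finset.sum_congr rfl fun S hS => ?_
      rw [Finset.mem_powersetCard] at hS
      have hj : j ∉ S := fun h => (Finset.mem_erase.mp (hS.1 h)).1 rfl
      rw [Finset.prod_insert hj]
    simp only [step]
    rw [Finset.sum_sigma']
    rw [Finset.smul_sum]
    have : ∀ T ∈ (univ : Finset (Fin n)).powersetCard (r+1),
        (r+1 : ℕ) • ∏ i ∈ T, (X i : MvPolynomial (Fin n) (ZMod 3))
        = ∑ j ∈ T, ∏ i ∈ T, X i := by
      intro T hT
      rw [Finset.sum_const, (Finset.mem_powersetCard.mp hT).2]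
    rw [Finset.sum_congr rfl this, Finset.sum_sigma']
    refine Finset.sum_nbij' (fun p => ⟨insert p.1 p.2, p.1⟩)
      (fun p => ⟨p.2, p.1.erase p.2⟩) ?_ ?_ ?_ ?_ ?_
    · rintro ⟨j, S⟩ hp
      simp only [Finset.mem_sigma, Finset.mem_powersetCard] at hp ⊢
      have hS := hp.2
      have hj : j ∉ S := fun h => (Finset.mem_erase.mp (hS.1 h)).1 rfl
      exact ⟨⟨Finset.subset_univ _, by rw [Finset.card_insert_of_notMem hj, hS.2]⟩,
        Finset.mem_insert_self _ _⟩
    · rintro ⟨T, j⟩ hp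
      simp only [Finset.mem_sigma, Finset.mem_powersetCard] at hp ⊢
      refine ⟨Finset.mem_univ _, fun x hx => Finset.mem_erase.mpr
        ⟨(Finset.mem_erase.mp hx).1, Finset.mem_univ _⟩, ?_⟩
      rw [Finset.card_erase_of_mem hp.2, hp.1.2]
      omega
    · rintro ⟨j, S⟩ hp
      simp only [Finset.mem_sigma, Finset.mem_powersetCard] at hp
      have hj : j ∉ S := fun h => (Finset.mem_erase.mp (hp.2.1 h)).1 rfl
      simp [Finset.erase_insert hj]
    · rintro ⟨T, j⟩ hp
      simp only [Finset.mem_sigma, Finset.mem_powersetCard] at hp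
      simp [Finset.insert_erase hp.2]
    · rintro ⟨j, S⟩ hp
      rfl
  have hchar : ((r+1 : ℕ) : ZMod 3) = 0 := by
    have h3 : (3 : ℕ) ∣ r + 1 := by omega
    exact (ZMod.natCast_eq_zero_iff _ _).mpr h3
  calc ∑ j, X j * I j
      = (∏ e ∈ univ.filter (fun e : Fin n × Fin n => e.1 < e.2),
          (X e.1 - X e.2 : MvPolynomial (Fin n) (ZMod 3))) *
        ∑ j : Fin n, X j * ∑ S ∈ (univ.erase j).powersetCard r, ∏ i ∈ S, X i := by
        rw [Finset.mul_sum]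
        exact Finset.sum_congr rfl fun j _ => by rw [hI j]; ring
    _ = 0 := by
        have hc : ((r+1 : ℕ) : MvPolynomial (Fin n) (ZMod 3)) = 0 := by
          rw [← map_natCast (C : ZMod 3 →+* MvPolynomial (Fin n) (ZMod 3)), hchar, map_zero]
        rw [key, nsmul_eq_mul, hc, zero_mul, mul_zero]
end
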